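/- In an E-Ehresmann semigroup S, the subset Reg_E(S) = {a ∈ S : a R a⁺ and a L a*} is a down ideal with respect to both partial orders ≤_r and ≤_l: if a ∈ Reg_E(S) and b ≤_r a or b ≤_l a, then b ∈ Reg_E(S). -/

import Mathlib

/-- An E-Ehresmann semigroup as a (2,1,1)-algebra. -/
class EhresmannSemigroup (S : Type*) extends Semigroup S where
  plus : S → S
  estar : S → S
  plus_mul_self : ∀ x : S, plus x * x = x
  plus_prod_idem : ∀ x y : S, plus (plus x * plus y) = plus x * plus y
  plus_comm : ∀ x y : S, plus x * plus y = plus y * plus x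
  plus_absorb : ∀ x y : S, plus x * plus (x * y) = plus (x * y)
  plus_mul_plus : ∀ x y : S, plus (x * y) = plus (x * plus y)
  mul_estar_self : ∀ x : S, x * estar x = x
  estar_prod_idem : ∀ x y : S, estar (estar x * estar y) = estar x * estar y
  estar_comm : ∀ x y : S, estar x * estar y = estar y * estar x
  estar_absorb : ∀ x y : S, estar (x * y) * estar y = estar (x * y)
  estar_mul_estar : ∀ x y : S, estar (x * y) = estar (estar x * y)
  estar_plus : ∀ x : S, estar (plus x) = plus x
  plus_estar : ∀ x : S, plus (estar x) = estar x

open EhresmannSemigroup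

/-- The distinguished semilattice `E` of an `E`-Ehresmann semigroup. -/
def eE (S : Type*) [EhresmannSemigroup S] : Set S := Set.range (plus : S → S)

/-- The partial order `≤_r` : `a ≤_r b` iff `a = a⁺ b`. -/
def leR {S : Type*} [EhresmannSemigroup S] (a b : S) : Prop := a = plus a * b

/-- The partial order `≤_l` : `a ≤_l b` iff `a = b a*`. -/
def leL {S : Type*} [EhresmannSemigroup S] (a b : S) : Prop := a = b * estar a

/-- Green's `R` relation on a semigroup. -/
def rRel {S : Type*} [Semigroup S] (a b : S) : Prop :=
  (a = b ∨ ∃ x, a * x = b) ∧ (b = a ∨ ∃ x, b * x = a)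

/-- Green's `L` relation on a semigroup. -/
def lRel {S : Type*} [Semigroup S] (a b : S) : Prop :=
  (a = b ∨ ∃ x, x * a = b) ∧ (b = a ∨ ∃ x, x * b = a)

/-- Green's `D` relation on a semigroup. -/
def dRel {S : Type*} [Semigroup S] (a b : S) : Prop := ∃ c, rRel a c ∧ lRel c b

/-- The set `Reg_E(S)` of elements corresponding to invertible morphisms. -/
def regE (S : Type*) [EhresmannSemigroup S] : Set S :=
  {a | rRel a (plus a) ∧ lRel a (estar a)}

/-- `C(a)` is an invertible morphism of the associated Ehresmann category. -/
def invertibleC {S : Type*} [EhresmannSemigroup S] (a : S) : Prop :=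
  ∃ b, plus b = estar a ∧ estar b = plus a ∧ a * b = plus a ∧ b * a = estar a

open EhresmannSemigroup

/-!
An element `a` lies in `Reg_E(S)` exactly when it has a "local inverse" `a'` with `a a' = a⁺` and
`a' a = a*`. If `b ≤_r a` then `b = e a` with `e = b⁺ ∈ E`, and `a' e` and `(e a)* a' e` witness
`e a R (e a)⁺` and `e a L (e a)*`; the key computation is `((e a)* a')* = (e a a')* = e a⁺`, so right
multiplication by `e a⁺` fixes `(e a)* a'`. The case `b ≤_l a` is the dual statement, obtained by
passing to the opposite semigroup, where `⁺` and `*` swap roles.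
-/

namespace EhresmannSemigroup

open MulOpposite

variable {S : Type*} [EhresmannSemigroup S]

@[simp]
lemma plus_plus (x : S) : plus (plus x) = plus x := by
  rw [← estar_plus x, plus_estar]

lemma plus_mul_plus_self (x : S) : plus x * plus x = plus x := by
  simpa using plus_mul_self (plus x)

lemma plus_plus_mul (c a : S) : plus (plus c * a) = plus c * plus a := by
  rw [plus_mul_plus, plus_prod_idem]

lemma estar_plus_mul_plus (c a : S) : estar (plus c * plus a) = plus c * plus a := by
  rw [← plus_prod_idem, estar_plus]

/-- `a R a⁺` and `a L a*` only need their nontrivial halves, as `a⁺ a = a` and `a a* = a`. -/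
lemma mem_regE_iff {a : S} :
    a ∈ regE S ↔ (∃ x, a * x = plus a) ∧ ∃ y, y * a = estar a := by
  refine ⟨fun ⟨⟨hr, _⟩, ⟨hl, _⟩⟩ => ⟨?_, ?_⟩, fun ⟨hr, hl⟩ =>
    ⟨⟨Or.inr hr, Or.inr ⟨a, plus_mul_self a⟩⟩, ⟨Or.inr hl, Or.inr ⟨a, mul_estar_self a⟩⟩⟩⟩
  · rcases hr with h | h
    · exact ⟨a, by nth_rw 1 [h]; exact (plus_mul_self a).trans h⟩
    · exact h
  · rcases hl with h | h
    · exact ⟨a, by nth_rw 2 [h]; exact (mul_estar_self a).trans h⟩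
    · exact h

lemma exists_mul_eq_plus_and_mul_eq_estar {a : S} (ha : a ∈ regE S) :
    ∃ a', a * a' = plus a ∧ a' * a = estar a := by
  obtain ⟨⟨x, hx⟩, ⟨y, hy⟩⟩ := mem_regE_iff.1 ha
  refine ⟨y * a * x, ?_, ?_⟩
  · rw [← mul_assoc, hy, mul_estar_self, hx]
  · rw [mul_assoc y a x, hx, mul_assoc, plus_mul_self, hy]

theorem plus_mul_mem_regE (c : S) {a : S} (ha : a ∈ regE S) : plus c * a ∈ regE S := by
  obtain ⟨a', hr, hl⟩ := exists_mul_eq_plus_and_mul_eq_estar ha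
  set e := plus c
  set f := estar (e * a)
  have he : e * e = e := plus_mul_plus_self c
  have hfa' : f * a' * (e * plus a) = f * a' := by
    have : estar (f * a') = e * plus a := by
      rw [← estar_mul_estar, mul_assoc, hr, estar_plus_mul_plus]
    rw [← this, mul_estar_self]
  refine mem_regE_iff.2 ⟨⟨a' * e, ?_⟩, ⟨f * a' * e, ?_⟩⟩
  · calc e * a * (a' * e) = e * (plus a * e) := by rw [← hr]; simp only [mul_assoc]
      _ = e * plus a := by rw [← plus_comm, ← mul_assoc, he]
      _ = plus (e * a) := (plus_plus_mul c a).symm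
  · calc f * a' * e * (e * a) = f * a' * (e * plus a) * a := by
          rw [mul_assoc (f * a') e, ← mul_assoc e e, he, mul_assoc _ _ a, mul_assoc e,
            plus_mul_self]
      _ = f * estar a := by rw [hfa', mul_assoc, hl]
      _ = f := estar_absorb e a

instance : EhresmannSemigroup Sᵐᵒᵖ where
  plus x := op (estar x.unop)
  estar x := op (plus x.unop)
  plus_mul_self x := congrArg op (mul_estar_self x.unop)
  plus_prod_idem x y := congrArg op (estar_prod_idem y.unop x.unop)
  plus_comm x y := congrArg op (estar_comm y.unop x.unop)
  plus_absorb x y := congrArg op (estar_absorb y.unop x.unop)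
  plus_mul_plus x y := congrArg op (estar_mul_estar y.unop x.unop)
  mul_estar_self x := congrArg op (plus_mul_self x.unop)
  estar_prod_idem x y := congrArg op (plus_prod_idem y.unop x.unop)
  estar_comm x y := congrArg op (plus_comm y.unop x.unop)
  estar_absorb x y := congrArg op (plus_absorb y.unop x.unop)
  estar_mul_estar x y := congrArg op (plus_mul_plus y.unop x.unop)
  estar_plus x := congrArg op (plus_estar x.unop)
  plus_estar x := congrArg op (estar_plus x.unop)

@[simp]
lemma plus_op (a : S) : plus (op a) = op (estar a) := rfl

@[simp]
lemma estar_op (a : S) : estar (op a) = op (plus a) := rfl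

@[simp]
lemma op_mem_regE_iff {a : S} : op a ∈ regE Sᵐᵒᵖ ↔ a ∈ regE S := by
  simp only [mem_regE_iff, op_surjective.exists, plus_op, estar_op, ← op_mul, op_inj]
  exact and_comm

theorem mul_estar_mem_regE (c : S) {a : S} (ha : a ∈ regE S) : a * estar c ∈ regE S := by
  simpa [← op_mul] using plus_mul_mem_regE (op c) (op_mem_regE_iff.2 ha)

end EhresmannSemigroup

/-- In an E-Ehresmann semigroup `S`, the subset `Reg_E(S)` is a
down ideal with respect to both `≤_r` and `≤_l`: if `a ∈ Reg_E(S)` and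
`b ≤_r a` or `b ≤_l a`, then `b ∈ Reg_E(S)`. -/
theorem regE_down_ideal (S : Type*) [EhresmannSemigroup S]
    (a : S) (ha : a ∈ regE S) (b : S) :
    (leR b a → b ∈ regE S) ∧ (leL b a → b ∈ regE S) := by
  refine ⟨fun hb => ?_, fun hb => ?_⟩
  · rw [hb]
    exact plus_mul_mem_regE b ha
  · rw [hb]
    exact mul_estar_mem_regE b ha
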